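/- arXiv:2003.03563 — 7 statements merged into one kernel-verified Lean document; each statement's English description precedes it below -/
import Mathlib

section
/- Let f > 0, c₁, c₂ ∈ ℝ, and set k = √(f/(f+1)). Define φ₀(t) = t − arctan(k·tan((2c₁+t)/k)) and Ω₀(t) = c₂·(cos(2(2c₁+t)/k) + 2f + 1). Then at every real t with cos((2c₁+t)/k) ≠ 0, the functions Ω₀ and φ₀ are differentiable and satisfy Ω₀'(t) = −Ω₀(t)·sin(2(t−φ₀(t)))/f and φ₀'(t) = −sin²(t−φ₀(t))/f. -/
/-!
With `u = (2c₁ + t)/k` one has `t - φ₀ t = arctan (k tan u)`, so every quantity in the system is a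
rational function of `sin u`, `cos u` with denominator `cos² u + k² sin² u`. Both equations then
reduce to `sin² u + cos² u = 1` and `k² (f + 1) = f`.
-/

open Real

namespace Real

theorem sin_two_mul_arctan (x : ℝ) : sin (2 * arctan x) = 2 * x / (1 + x ^ 2) := by
  have hsin : sin (arctan x) = x * cos (arctan x) := by
    rw [sin_arctan, cos_arctan]
    ring
  rw [sin_two_mul, hsin]
  linear_combination 2 * x * cos_sq_arctan x

section MulTan

variable {k u : ℝ}

theorem one_add_sq_mul_tan (hu : cos u ≠ 0) :
    1 + (k * tan u) ^ 2 = (cos u ^ 2 + k ^ 2 * sin u ^ 2) / cos u ^ 2 := by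
  rw [tan_eq_sin_div_cos]
  field_simp

theorem cos_sq_add_mul_sin_sq_pos (hu : cos u ≠ 0) : 0 < cos u ^ 2 + k ^ 2 * sin u ^ 2 := by
  positivity

theorem sin_sq_arctan_mul_tan (hu : cos u ≠ 0) :
    sin (arctan (k * tan u)) ^ 2 = k ^ 2 * sin u ^ 2 / (cos u ^ 2 + k ^ 2 * sin u ^ 2) := by
  have := (cos_sq_add_mul_sin_sq_pos (k := k) hu).ne'
  rw [sin_sq_arctan, one_add_sq_mul_tan hu, tan_eq_sin_div_cos]
  field_simp

theorem sin_two_mul_arctan_mul_tan (hu : cos u ≠ 0) :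
    sin (2 * arctan (k * tan u)) = 2 * k * sin u * cos u / (cos u ^ 2 + k ^ 2 * sin u ^ 2) := by
  have := (cos_sq_add_mul_sin_sq_pos (k := k) hu).ne'
  rw [sin_two_mul_arctan, one_add_sq_mul_tan hu, tan_eq_sin_div_cos]
  field_simp

theorem hasDerivAt_arctan_mul_tan (hu : cos u ≠ 0) :
    HasDerivAt (fun v => arctan (k * tan v)) (k / (cos u ^ 2 + k ^ 2 * sin u ^ 2)) u := by
  have := (cos_sq_add_mul_sin_sq_pos (k := k) hu).ne'
  refine ((hasDerivAt_arctan _).comp u ((hasDerivAt_tan hu).const_mul k)).congr_deriv ?_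
  rw [one_add_sq_mul_tan hu]
  field_simp

end MulTan

end Real

/-- Proposition 1 (unperturbed problem `P(0)`): the explicit two-parameter family
`Ω₀(t) = c₂(cos(2(2c₁+t)/k) + 2f + 1)`, `φ₀(t) = t − arctan(k tan((2c₁+t)/k))`,
with `k = √(f/(f+1))`, solves `Ω₀' = −Ω₀ sin(2(t−φ₀))/f`, `φ₀' = −sin²(t−φ₀)/f`
at every `t` where `cos((2c₁+t)/k) ≠ 0`. -/
theorem stmt0 (f c₁ c₂ : ℝ) (hf : 0 < f)
    (k : ℝ) (hk : k = Real.sqrt (f / (f + 1)))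
    (φ₀ Ω₀ : ℝ → ℝ)
    (hφ₀ : ∀ t, φ₀ t = t - Real.arctan (k * Real.tan ((2 * c₁ + t) / k)))
    (hΩ₀ : ∀ t, Ω₀ t = c₂ * (Real.cos (2 * (2 * c₁ + t) / k) + 2 * f + 1))
    (t : ℝ) (ht : Real.cos ((2 * c₁ + t) / k) ≠ 0) :
    HasDerivAt Ω₀ (-(Ω₀ t) * Real.sin (2 * (t - φ₀ t)) / f) t ∧
    HasDerivAt φ₀ (-(Real.sin (t - φ₀ t)) ^ 2 / f) t := by
  have hk_pos : 0 < k := hk ▸ sqrt_pos.mpr (by positivity)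
  have hk_sq : k ^ 2 * (f + 1) = f := by
    rw [hk, sq_sqrt (by positivity)]
    field_simp
  have hinner : HasDerivAt (fun s => (2 * c₁ + s) / k) (1 / k) t := by
    simpa using ((hasDerivAt_id t).const_add (2 * c₁)).div_const k
  set u := (2 * c₁ + t) / k
  have hden := (cos_sq_add_mul_sin_sq_pos (k := k) ht).ne'
  have hdiff : t - φ₀ t = arctan (k * tan u) := by rw [hφ₀, sub_sub_cancel]
  have hΩt : Ω₀ t = c₂ * (2 * cos u ^ 2 + 2 * f) := by
    rw [hΩ₀, mul_div_assoc, cos_two_mul]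
    ring
  rw [hdiff, hΩt, sin_sq_arctan_mul_tan ht, sin_two_mul_arctan_mul_tan ht, funext hΩ₀, funext hφ₀]
  constructor
  · have hinner₂ : HasDerivAt (fun s => 2 * (2 * c₁ + s) / k) (2 / k) t := by
      simpa using (((hasDerivAt_id t).const_add (2 * c₁)).const_mul 2).div_const k
    refine ((((hasDerivAt_cos _).comp t hinner₂).add_const _).add_const _
      |>.const_mul c₂).congr_deriv ?_
    rw [mul_div_assoc, sin_two_mul]
    field_simp
    linear_combination c₂ * sin u * cos u * (cos u ^ 2 * hk_sq - f * k ^ 2 * sin_sq_add_cos_sq u)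
  · refine ((hasDerivAt_id t).sub ((hasDerivAt_arctan_mul_tan ht).comp t hinner)).congr_deriv ?_
    field_simp
    linear_combination sin u ^ 2 * hk_sq + f * sin_sq_add_cos_sq u
end

section
/- Let f > 0, c₁, c₃ ∈ ℝ, and set k = √(f/(f+1)). Define φ₀(t) = t − arctan(k·tan((2c₁+t)/k)) and φ₁(t) = (1/2)·[ (2c₃ − 3f(2f+1)) / (cos(2(2c₁+t)/k) + 2f + 1) + 3f ]. Then at every real t with cos((2c₁+t)/k) ≠ 0, φ₁ is differentiable and satisfies φ₁'(t) = (2φ₁(t) − 3f)·sin(2(t−φ₀(t)))/(2f). -/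
/-!
Write `u = (2c₁ + t)/k`, `D = cos 2u + 2f + 1` and `A = 2c₃ − 3f(2f+1)`, so that `2φ₁ − 3f = A/D`
and `φ₁' = A sin 2u / (k D²)`. On the other side `t − φ₀(t) = arctan (k tan u)`, and
`sin (2 arctan x) = 2x/(1 + x²)` gives `sin (2(t − φ₀)) = k sin 2u / (cos² u + k² sin² u)`.
Because `k² = f/(f+1)` this denominator is `D / (2(f+1))`, and the claimed identity reduces to
`k² (f + 1) = f`.
-/

open Real

theorem Real.sin_two_mul_arctan_s1 (x : ℝ) : sin (2 * arctan x) = 2 * x / (1 + x ^ 2) := by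
  have h : 0 < 1 + x ^ 2 := by positivity
  rw [sin_two_mul, sin_arctan, cos_arctan, mul_assoc, div_mul_div_comm, mul_one,
    mul_self_sqrt h.le, mul_div_assoc]

theorem Real.sin_two_mul_arctan_mul_tan_s1 (k u : ℝ) (hu : cos u ≠ 0) :
    sin (2 * arctan (k * tan u)) = k * sin (2 * u) / (cos u ^ 2 + k ^ 2 * sin u ^ 2) := by
  rw [sin_two_mul_arctan_s1, tan_eq_sin_div_cos, sin_two_mul]
  field_simp

theorem cos_sq_add_sq_mul_sin_sq {f k : ℝ} (hf : f + 1 ≠ 0) (hk : k ^ 2 = f / (f + 1)) (u : ℝ) :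
    cos u ^ 2 + k ^ 2 * sin u ^ 2 = (cos (2 * u) + 2 * f + 1) / (2 * (f + 1)) := by
  rw [hk, cos_two_mul]
  field_simp
  linear_combination (2 * f) * sin_sq_add_cos_sq u

theorem HasDerivAt.const_div_cos_add {g : ℝ → ℝ} {g' t : ℝ} (hg : HasDerivAt g g' t) (a c : ℝ)
    (h : Real.cos (g t) + c ≠ 0) :
    HasDerivAt (fun s => a / (Real.cos (g s) + c))
      (a * Real.sin (g t) * g' / (Real.cos (g t) + c) ^ 2) t :=
  ((hasDerivAt_const t a).div (hg.cos.add_const c) h).congr_deriv (by ring)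

/-- First-order phase correction of Proposition 2: with `k = √(f/(f+1))`,
`φ₀(t) = t − arctan(k tan((2c₁+t)/k))` and
`φ₁(t) = ((2c₃ − 3f(2f+1))/(cos(2(2c₁+t)/k) + 2f + 1) + 3f)/2`,
the function `φ₁` satisfies `φ₁' = (2φ₁ − 3f) sin(2(t−φ₀))/(2f)` at every `t`
where `cos((2c₁+t)/k) ≠ 0`. -/
theorem stmt1 (f c₁ c₃ : ℝ) (hf : 0 < f)
    (k : ℝ) (hk : k = Real.sqrt (f / (f + 1)))
    (φ₀ φ₁ : ℝ → ℝ)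
    (hφ₀ : ∀ t, φ₀ t = t - Real.arctan (k * Real.tan ((2 * c₁ + t) / k)))
    (hφ₁ : ∀ t, φ₁ t = (1 / 2) *
      ((2 * c₃ - 3 * f * (2 * f + 1)) / (Real.cos (2 * (2 * c₁ + t) / k) + 2 * f + 1) + 3 * f))
    (t : ℝ) (ht : Real.cos ((2 * c₁ + t) / k) ≠ 0) :
    HasDerivAt φ₁ ((2 * φ₁ t - 3 * f) * Real.sin (2 * (t - φ₀ t)) / (2 * f)) t := by
  set A := 2 * c₃ - 3 * f * (2 * f + 1)
  set g : ℝ → ℝ := fun s => 2 * (2 * c₁ + s) / k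
  have hk_sq : k ^ 2 = f / (f + 1) := by rw [hk, sq_sqrt (by positivity)]
  have hk_sq_mul : k ^ 2 * (f + 1) = f := by rw [hk_sq]; field_simp
  have hk_ne : k ≠ 0 := by rw [hk]; positivity
  have hden : Real.cos (g t) + (2 * f + 1) ≠ 0 := by nlinarith [neg_one_le_cos (g t)]
  have hg : HasDerivAt g (2 / k) t := by
    simpa using (((hasDerivAt_id t).const_add (2 * c₁)).const_mul 2).div_const k
  have hφ₁g : φ₁ = fun s => (1 / 2) * (A / (Real.cos (g s) + (2 * f + 1)) + 3 * f) := by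
    ext s; rw [hφ₁]; simp only [g, add_assoc]
  have hphase : Real.sin (2 * (t - φ₀ t)) =
      2 * k * (f + 1) * Real.sin (g t) / (Real.cos (g t) + (2 * f + 1)) := by
    have hg2 : g t = 2 * ((2 * c₁ + t) / k) := by simp only [g]; ring
    rw [hφ₀, sub_sub_cancel, sin_two_mul_arctan_mul_tan_s1 _ _ ht,
      cos_sq_add_sq_mul_sin_sq (by positivity) hk_sq, hg2]
    field_simp
    ring
  rw [hφ₁g]
  refine (((hg.const_div_cos_add A _ hden).add_const (3 * f)).const_mul (1 / 2)).congr_deriv ?_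
  rw [hphase]
  field_simp
  linear_combination (-A * Real.sin (g t)) * hk_sq_mul
end

section
/- Let f > 0 and let c : ℝ → ℝ be differentiable. Define g : ℝ × ℝ → ℝ by g(t, φ) = 3f/2 + exp( −cos(2(t−φ))/(2f+1) )·c(t/(2f) + φ). Then g is differentiable and satisfies −2f·∂g/∂t (t,φ) − 3f·sin(2(t−φ)) + 2·g(t,φ)·sin(2(t−φ)) + ∂g/∂φ (t,φ) = 0 for all (t, φ) ∈ ℝ². -/
/-!
The operator `L = -k ∂_t + ∂_φ` annihilates every function of the characteristic variable
`t / k + φ` and acts as `-(k + 1) d/ds` on functions of `s = t - φ`. With `k = 2f`, the factor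
`E(s) = exp (-cos (2s) / (2f + 1))` satisfies `-(2f + 1) E' = -2 sin (2s) E`, so `L g = -2 sin (2s) E c`,
which cancels `-3f sin (2s) + 2 g sin (2s) = 2 sin (2s) E c`.
-/

open Real

theorem deriv_transport_comp_sub_mul_comp_div_add {u v : ℝ → ℝ} {k t φ : ℝ} (hk : k ≠ 0)
    (hu : DifferentiableAt ℝ u (t - φ)) (hv : DifferentiableAt ℝ v (t / k + φ)) :
    -k * deriv (fun t' => u (t' - φ) * v (t' / k + φ)) t
        + deriv (fun φ' => u (t - φ') * v (t / k + φ')) φ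
      = -(k + 1) * deriv u (t - φ) * v (t / k + φ) := by
  have hu_t : HasDerivAt (fun t' => u (t' - φ)) (deriv u (t - φ)) t :=
    hu.hasDerivAt.comp_sub_const t φ
  have hu_φ : HasDerivAt (fun φ' => u (t - φ')) (-deriv u (t - φ)) φ :=
    (hu.hasDerivAt.comp φ ((hasDerivAt_id' φ).const_sub t)).congr_deriv (by ring)
  have hv_t : HasDerivAt (fun t' => v (t' / k + φ)) (deriv v (t / k + φ) * (1 / k)) t :=
    hv.hasDerivAt.comp t (((hasDerivAt_id' t).div_const k).add_const φ)
  have hv_φ : HasDerivAt (fun φ' => v (t / k + φ')) (deriv v (t / k + φ)) φ :=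
    hv.hasDerivAt.comp_const_add (t / k) φ
  rw [deriv_fun_mul hu_t.differentiableAt hv_t.differentiableAt,
    deriv_fun_mul hu_φ.differentiableAt hv_φ.differentiableAt,
    hu_t.deriv, hv_t.deriv, hu_φ.deriv, hv_φ.deriv]
  field_simp
  ring

theorem hasDerivAt_exp_neg_cos_two_mul_div (a s : ℝ) :
    HasDerivAt (fun s => exp (-cos (2 * s) / a))
      (exp (-cos (2 * s) / a) * (2 * sin (2 * s) / a)) s := by
  have h2 : HasDerivAt (fun s : ℝ => 2 * s) 2 s := by simpa using (hasDerivAt_id' s).const_mul 2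
  exact (h2.cos.fun_neg.div_const a).exp.congr_deriv (by ring)

/-- Third solvability lemma of Proposition 3: any
`g(t, φ) = 3f/2 + exp(−cos(2(t−φ))/(2f+1))·c(t/(2f) + φ)` with `c` differentiable solves the
linear PDE `−2f·g_t − 3f·sin(2(t−φ)) + 2g·sin(2(t−φ)) + g_φ = 0`. -/
theorem stmt5 (f : ℝ) (hf : 0 < f) (c : ℝ → ℝ) (hc : Differentiable ℝ c)
    (g : ℝ × ℝ → ℝ)
    (hg : ∀ p : ℝ × ℝ, g p = 3 * f / 2 +
      Real.exp (-Real.cos (2 * (p.1 - p.2)) / (2 * f + 1)) * c (p.1 / (2 * f) + p.2)) :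
    Differentiable ℝ g ∧
    ∀ t φ : ℝ,
      -(2 * f) * deriv (fun t' => g (t', φ)) t - 3 * f * Real.sin (2 * (t - φ)) +
        2 * g (t, φ) * Real.sin (2 * (t - φ)) + deriv (fun φ' => g (t, φ')) φ = 0 := by
  obtain rfl : g = _ := funext hg
  refine ⟨by fun_prop, fun t φ => ?_⟩
  have hE := hasDerivAt_exp_neg_cos_two_mul_div (2 * f + 1) (t - φ)
  have hL := deriv_transport_comp_sub_mul_comp_div_add (by positivity)
    hE.differentiableAt (hc (t / (2 * f) + φ))
  simp only [deriv_const_add'] at hL ⊢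
  rw [hE.deriv] at hL
  field_simp at hL ⊢
  linear_combination hL
end

section
/- Fix γ ∈ ℝ and define F : ℝ³ → ℝ³ by F(Ω, Ωm, Ωk) = ( Ω·(3γΩm + 3Ω + 2Ωk − 3), Ωm·(3γ(Ωm−1) + 3Ω + 2Ωk), Ωk·(3γΩm + 3Ω + 2Ωk − 2) ). Then F(P) = 0 for P₁ = (0,1,0), P₂ = (0,0,1), P₃ = (0,0,0), P₄ = (1,0,0), and the characteristic polynomial of the Jacobian matrix of F satisfies: at P₁ it equals (X − 3(γ−1))·(X − 3γ)·(X − (3γ−2)); at P₂ it equals (X − 2)·(X + 1)·(X − (2−3γ)); at P₃ it equals (X + 3)·(X + 2)·(X + 3γ); at P₄ it equals (X − 3)·(X − 1)·(X + 3(γ−1)). -/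
/-!
The vector field is of Lotka–Volterra type, `F y i = y i * (c i + (A y) i)` with
`c = (-3, -3γ, -2)` and every row of `A` equal to `(3, 3γ, 2)`, so its Jacobian at `x` is
`diag (c + A x) + diag x * A`. At a point supported on a single coordinate `k` (in particular at
each `Pᵢ`), the off-diagonal entries of this matrix vanish outside row `k`; every non-identity
permutation then picks one of these zeros, so the characteristic polynomial is the product of
`X - C d` over the diagonal entries `d = c i + (A x) i + x i * A i i`.
-/

open Polynomial Matrix

namespace Matrix

variable {n R : Type*} [Fintype n] [DecidableEq n] [CommRing R]

theorem det_eq_prod_diag_of_offDiag_zero_outside_row (M : Matrix n n R) (k : n)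
    (h : ∀ i j, i ≠ j → i ≠ k → M i j = 0) : M.det = ∏ i, M i i := by
  rw [← det_transpose, det_apply, Finset.sum_eq_single 1]
  · simp
  · intro σ _ hσ
    obtain ⟨a, ha⟩ : ∃ a, σ a ≠ a := by
      by_contra! hfix
      exact hσ (Equiv.ext hfix)
    obtain ⟨i, hi, hik⟩ : ∃ i, σ i ≠ i ∧ i ≠ k := by
      by_cases hak : a = k
      · exact ⟨σ a, fun h' => ha (σ.injective h'), hak ▸ ha⟩
      · exact ⟨a, ha, hak⟩
    rw [Finset.prod_eq_zero (Finset.mem_univ i) (h i (σ i) (Ne.symm hi) hik), smul_zero]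
  · simp

theorem charpoly_eq_prod_of_offDiag_zero_outside_row (M : Matrix n n R) (k : n)
    (h : ∀ i j, i ≠ j → i ≠ k → M i j = 0) : M.charpoly = ∏ i, (X - C (M i i)) := by
  refine (M.charmatrix.det_eq_prod_diag_of_offDiag_zero_outside_row k
    fun i j hij hik => ?_).trans ?_
  · rw [charmatrix_apply_ne _ _ _ hij, h i j hij hik, map_zero, neg_zero]
  · simp only [charmatrix_apply_eq]

end Matrix

section LotkaVolterra

variable {ι : Type*} [Fintype ι]

def lotkaVolterra (c : ι → ℝ) (A : Matrix ι ι ℝ) (y : ι → ℝ) : ι → ℝ :=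
  fun i => y i * (c i + (A *ᵥ y) i)

def lotkaVolterraJacobian [DecidableEq ι] (c : ι → ℝ) (A : Matrix ι ι ℝ) (x : ι → ℝ) :
    Matrix ι ι ℝ :=
  diagonal (c + A *ᵥ x) + diagonal x * A

theorem fderiv_lotkaVolterra_apply (c : ι → ℝ) (A : Matrix ι ι ℝ) (x v : ι → ℝ) (i : ι) :
    fderiv ℝ (fun y => lotkaVolterra c A y i) x v =
      v i * (c i + (A *ᵥ x) i) + x i * (A *ᵥ v) i := by
  have hrate := (hasFDerivAt_const (c i) x).add
    (LinearMap.toContinuousLinearMap (LinearMap.proj i ∘ₗ A.mulVecLin)).hasFDerivAt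
  have hLV : HasFDerivAt (fun y => lotkaVolterra c A y i) _ x :=
    (hasFDerivAt_apply i x).mul hrate
  rw [hLV.fderiv]
  simp only [LinearMap.coe_toContinuousLinearMap', LinearMap.coe_comp, LinearMap.coe_proj,
    Function.comp_apply, Function.eval, mulVecBilin_apply, _root_.add_apply, _root_.smul_apply,
    ContinuousLinearMap.proj_apply, zero_add, smul_eq_mul]
  ring

theorem fderiv_lotkaVolterra_apply_single [DecidableEq ι] (c : ι → ℝ) (A : Matrix ι ι ℝ)
    (x : ι → ℝ) (i j : ι) :
    fderiv ℝ (fun y => lotkaVolterra c A y i) x (Pi.single j 1) =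
      lotkaVolterraJacobian c A x i j := by
  rw [fderiv_lotkaVolterra_apply, mulVec_single_one]
  simp [lotkaVolterraJacobian, diagonal_apply, Pi.single_apply]

theorem charpoly_lotkaVolterraJacobian [DecidableEq ι] (c : ι → ℝ) (A : Matrix ι ι ℝ)
    {x : ι → ℝ} (k : ι) (hx : ∀ i, i ≠ k → x i = 0) :
    (lotkaVolterraJacobian c A x).charpoly =
      ∏ i, (X - C (c i + (A *ᵥ x) i + x i * A i i)) := by
  rw [charpoly_eq_prod_of_offDiag_zero_outside_row _ k fun i j hij hik => ?_]
  · simp [lotkaVolterraJacobian]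
  · simp [lotkaVolterraJacobian, hij, hx i hik]

end LotkaVolterra

/-- Table 1 of the paper: the guiding system of the time-averaged FLRW scalar-field
cosmology, with vector field
`F(Ω, Ωm, Ωk) = (Ω(3γΩm+3Ω+2Ωk−3), Ωm(3γ(Ωm−1)+3Ω+2Ωk), Ωk(3γΩm+3Ω+2Ωk−2))`,
has equilibrium points `P₁ = (0,1,0)`, `P₂ = (0,0,1)`, `P₃ = (0,0,0)`, `P₄ = (1,0,0)`,
and the characteristic polynomials of the Jacobian at these points are the stated
products of linear factors (recording the eigenvalues `{3(γ−1), 3γ, 3γ−2}`,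
`{2, −1, 2−3γ}`, `{−3, −2, −3γ}`, `{3, 1, −3(γ−1)}`). -/
theorem stmt11 (γ : ℝ) (F : (Fin 3 → ℝ) → (Fin 3 → ℝ))
    (hF : ∀ x, F x =
      ![x 0 * (3 * γ * x 1 + 3 * x 0 + 2 * x 2 - 3),
        x 1 * (3 * γ * (x 1 - 1) + 3 * x 0 + 2 * x 2),
        x 2 * (3 * γ * x 1 + 3 * x 0 + 2 * x 2 - 2)])
    (J : (Fin 3 → ℝ) → Matrix (Fin 3) (Fin 3) ℝ)
    (hJ : ∀ x i j, J x i j = fderiv ℝ (fun y => F y i) x (Pi.single j 1)) :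
    F ![0, 1, 0] = 0 ∧ F ![0, 0, 1] = 0 ∧ F ![0, 0, 0] = 0 ∧ F ![1, 0, 0] = 0 ∧
    (J ![0, 1, 0]).charpoly =
      (X - C (3 * (γ - 1))) * (X - C (3 * γ)) * (X - C (3 * γ - 2)) ∧
    (J ![0, 0, 1]).charpoly =
      (X - C 2) * (X + C 1) * (X - C (2 - 3 * γ)) ∧
    (J ![0, 0, 0]).charpoly =
      (X + C 3) * (X + C 2) * (X + C (3 * γ)) ∧
    (J ![1, 0, 0]).charpoly =
      (X - C 3) * (X - C 1) * (X + C (3 * (γ - 1))) := by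
  set c : Fin 3 → ℝ := ![-3, -(3 * γ), -2]
  set A : Matrix (Fin 3) (Fin 3) ℝ := of fun _ => ![3, 3 * γ, 2]
  have hLV : F = lotkaVolterra c A := by
    funext y i
    rw [hF]
    fin_cases i <;>
      simp only [lotkaVolterra, c, A, mulVec, dotProduct, of_apply, Fin.sum_univ_three, Fin.isValue,
        Fin.zero_eta, Fin.mk_one, Fin.reduceFinMk, cons_val_zero, cons_val_one, cons_val] <;>
      ring
  have hcharpoly : ∀ (x : Fin 3 → ℝ) (k : Fin 3), (∀ i, i ≠ k → x i = 0) →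
      (J x).charpoly = ∏ i, (X - C (c i + (A *ᵥ x) i + x i * A i i)) := fun x k hx => by
    have hJac : J x = lotkaVolterraJacobian c A x := by
      ext i j
      rw [hJ, hLV, fderiv_lotkaVolterra_apply_single]
    rw [hJac, charpoly_lotkaVolterraJacobian c A k hx]
  rw [hcharpoly ![0, 1, 0] 1 (by intro i hi; fin_cases i <;> simp_all),
    hcharpoly ![0, 0, 1] 2 (by intro i hi; fin_cases i <;> simp_all),
    hcharpoly ![0, 0, 0] 0 (by intro i hi; fin_cases i <;> simp_all),
    hcharpoly ![1, 0, 0] 0 (by intro i hi; fin_cases i <;> simp_all)]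
  refine ⟨by simp [hF], by simp [hF], by simp [hF], by simp [hF], ?_, ?_, ?_, ?_⟩ <;>
    simp only [c, A, mulVec, dotProduct, of_apply, Fin.sum_univ_three, Fin.prod_univ_three,
      Fin.isValue, cons_val_zero, cons_val_one, cons_val, map_add, map_sub, map_mul, map_neg,
      map_one, map_zero, map_ofNat] <;>
    ring
end

section
/- Fix γ ∈ ℝ and define G : ℝ³ → ℝ³ by G(Ω, Ωm, Σ) = ( Ω·(3(γΩm + Ω − 1) + 2Σ²), Ωm·(3γ(Ωm−1) + 2Σ² + 3Ω), (1/2)·Σ·(3(γΩm + Ω − 2) + 2Σ²) ). Then G(P) = 0 for P₁ = (0,1,0), P₂ = (1,0,0), P₃ = (0,0,−√3), P₄ = (0,0,√3), P₅ = (0,0,0), and the characteristic polynomial of the Jacobian matrix of G satisfies: at P₁ it equals (X − 3(γ−2)/2)·(X − 3(γ−1))·(X − 3γ); at P₂ it equals (X − 3)·(X + 3/2)·(X + 3(γ−1)); at P₃ and at P₄ it equals (X − 6)·(X − 3)·(X + 3(γ−2)); at P₅ it equals (X + 3)²·(X + 3γ). -/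
open Polynomial

/-! Each component of the field is a polynomial, so the chain rule gives its Jacobian `J(x)` in
closed form. All five equilibria lie on coordinate axes, where the entries `J₀₂`, `J₁₂` and one
of `J₀₁`, `J₁₀` vanish; the characteristic polynomial is then the product of the `X - Jᵢᵢ`, and
`Σ² = 3` at `P₃` and `P₄` makes their diagonals agree. -/

theorem fderiv_apply_single_of_hasFDerivAt_toLin' {𝕜 : Type*} [NontriviallyNormedField 𝕜]
    [CompleteSpace 𝕜] {m n : Type*} [Fintype m] [Fintype n] [DecidableEq n]
    {F : (n → 𝕜) → m → 𝕜} {M : Matrix m n 𝕜} {x : n → 𝕜}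
    (hF : HasFDerivAt F (Matrix.toLin' M).toContinuousLinearMap x) (i : m) (j : n) :
    fderiv 𝕜 (fun y => F y i) x (Pi.single j 1) = M i j := by
  rw [(hasFDerivAt_pi'.1 hF i).fderiv]
  simp

theorem Matrix.charpoly_fin_three_eq_prod_diag {R : Type*} [CommRing R]
    (M : Matrix (Fin 3) (Fin 3) R) (h02 : M 0 2 = 0) (h12 : M 1 2 = 0)
    (h01 : M 0 1 * M 1 0 = 0) :
    M.charpoly = (X - C (M 0 0)) * (X - C (M 1 1)) * (X - C (M 2 2)) := by
  have hC : C (M 0 1) * C (M 1 0) = 0 := by rw [← C_mul, h01, C_0]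
  rw [Matrix.charpoly, Matrix.det_fin_three]
  simp [h02, h12]
  linear_combination (X - C (M 2 2)) * hC

namespace BianchiIGuiding

noncomputable section

def field (γ : ℝ) (x : Fin 3 → ℝ) : Fin 3 → ℝ :=
  ![x 0 * (3 * (γ * x 1 + x 0 - 1) + 2 * (x 2) ^ 2),
    x 1 * (3 * γ * (x 1 - 1) + 2 * (x 2) ^ 2 + 3 * x 0),
    (1 / 2) * x 2 * (3 * (γ * x 1 + x 0 - 2) + 2 * (x 2) ^ 2)]

def jacobian (γ : ℝ) (x : Fin 3 → ℝ) : Matrix (Fin 3) (Fin 3) ℝ :=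
  !![3 * γ * x 1 + 6 * x 0 - 3 + 2 * x 2 ^ 2, 3 * γ * x 0, 4 * x 0 * x 2;
     3 * x 1, 6 * γ * x 1 - 3 * γ + 2 * x 2 ^ 2 + 3 * x 0, 4 * x 1 * x 2;
     3 / 2 * x 2, 3 / 2 * γ * x 2, 3 / 2 * (γ * x 1 + x 0 - 2) + 3 * x 2 ^ 2]

end

theorem hasFDerivAt_field (γ : ℝ) (x : Fin 3 → ℝ) :
    HasFDerivAt (field γ) (Matrix.toLin' (jacobian γ x)).toContinuousLinearMap x := by
  have h0 := hasFDerivAt_apply (𝕜 := ℝ) (0 : Fin 3) x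
  have h1 := hasFDerivAt_apply (𝕜 := ℝ) (1 : Fin 3) x
  have h2 := hasFDerivAt_apply (𝕜 := ℝ) (2 : Fin 3) x
  refine hasFDerivAt_pi'.2 fun i => ?_
  fin_cases i
  · refine (h0.mul (((((h1.const_mul γ).add h0).sub_const 1).const_mul 3).add
      ((h2.pow 2).const_mul 2))).congr_fderiv ?_
    ext v
    simp [jacobian, dotProduct, Fin.sum_univ_three]
    ring
  · refine (h1.mul ((((h1.sub_const 1).const_mul (3 * γ)).add ((h2.pow 2).const_mul 2)).add
      (h0.const_mul 3))).congr_fderiv ?_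
    ext v
    simp [jacobian, dotProduct, Fin.sum_univ_three]
    ring
  · refine ((h2.const_mul (1 / 2)).mul (((((h1.const_mul γ).add h0).sub_const 2).const_mul 3).add
      ((h2.pow 2).const_mul 2))).congr_fderiv ?_
    ext v
    simp [jacobian, dotProduct, Fin.sum_univ_three]
    ring

theorem field_eq_zero_of_sq_eq_three (γ : ℝ) {s : ℝ} (hs : s ^ 2 = 3) :
    field γ ![0, 0, s] = 0 := by
  ext i
  fin_cases i <;> simp [field, hs]
  norm_num

theorem charpoly_jacobian_of_sq_eq_three (γ : ℝ) {s : ℝ} (hs : s ^ 2 = 3) :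
    (jacobian γ ![0, 0, s]).charpoly = (X - C 6) * (X - C 3) * (X + C (3 * (γ - 2))) := by
  rw [Matrix.charpoly_fin_three_eq_prod_diag _ (by simp [jacobian]) (by simp [jacobian])
    (by simp [jacobian])]
  refine Polynomial.funext fun t => ?_
  simp [jacobian, hs]
  ring

end BianchiIGuiding

open BianchiIGuiding in
/-- Table 2 of the paper: the guiding system of the time-averaged Bianchi I scalar-field
cosmology, with vector field
`G(Ω, Ωm, Σ) = (Ω(3(γΩm+Ω−1)+2Σ²), Ωm(3γ(Ωm−1)+2Σ²+3Ω), (1/2)Σ(3(γΩm+Ω−2)+2Σ²))`,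
has equilibrium points `P₁ = (0,1,0)`, `P₂ = (1,0,0)`, `P₃ = (0,0,−√3)`, `P₄ = (0,0,√3)`,
`P₅ = (0,0,0)`, with the stated characteristic polynomials of the Jacobian, recording the
eigenvalues `{3(γ−2)/2, 3(γ−1), 3γ}`, `{3, −3/2, −3(γ−1)}`, `{6, 3, −3(γ−2)}` (at both
`P₃` and `P₄`), `{−3, −3, −3γ}`. -/
theorem stmt12 (γ : ℝ) (G : (Fin 3 → ℝ) → (Fin 3 → ℝ))
    (hG : ∀ x, G x =
      ![x 0 * (3 * (γ * x 1 + x 0 - 1) + 2 * (x 2) ^ 2),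
        x 1 * (3 * γ * (x 1 - 1) + 2 * (x 2) ^ 2 + 3 * x 0),
        (1 / 2) * x 2 * (3 * (γ * x 1 + x 0 - 2) + 2 * (x 2) ^ 2)])
    (J : (Fin 3 → ℝ) → Matrix (Fin 3) (Fin 3) ℝ)
    (hJ : ∀ x i j, J x i j = fderiv ℝ (fun y => G y i) x (Pi.single j 1)) :
    G ![0, 1, 0] = 0 ∧ G ![1, 0, 0] = 0 ∧ G ![0, 0, -Real.sqrt 3] = 0 ∧
    G ![0, 0, Real.sqrt 3] = 0 ∧ G ![0, 0, 0] = 0 ∧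
    (J ![0, 1, 0]).charpoly =
      (X - C (3 * (γ - 2) / 2)) * (X - C (3 * (γ - 1))) * (X - C (3 * γ)) ∧
    (J ![1, 0, 0]).charpoly =
      (X - C 3) * (X + C (3 / 2)) * (X + C (3 * (γ - 1))) ∧
    (J ![0, 0, -Real.sqrt 3]).charpoly =
      (X - C 6) * (X - C 3) * (X + C (3 * (γ - 2))) ∧
    (J ![0, 0, Real.sqrt 3]).charpoly =
      (X - C 6) * (X - C 3) * (X + C (3 * (γ - 2))) ∧
    (J ![0, 0, 0]).charpoly =
      (X + C 3) ^ 2 * (X + C (3 * γ)) := by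
  obtain rfl : G = field γ := funext hG
  obtain rfl : J = jacobian γ := by
    ext x i j
    rw [hJ, fderiv_apply_single_of_hasFDerivAt_toLin' (hasFDerivAt_field γ x)]
  have h3 : Real.sqrt 3 ^ 2 = 3 := Real.sq_sqrt (by norm_num)
  have h3' : (-Real.sqrt 3) ^ 2 = 3 := by rw [neg_sq, h3]
  refine ⟨?_, ?_, field_eq_zero_of_sq_eq_three γ h3', field_eq_zero_of_sq_eq_three γ h3, ?_, ?_, ?_,
    charpoly_jacobian_of_sq_eq_three γ h3', charpoly_jacobian_of_sq_eq_three γ h3, ?_⟩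
  iterate 3 ext i; fin_cases i <;> simp [field]
  all_goals
    rw [Matrix.charpoly_fin_three_eq_prod_diag _ (by simp [jacobian]) (by simp [jacobian])
      (by simp [jacobian])]
    refine Polynomial.funext fun t => ?_
    simp [jacobian]
    ring
end

section
/- There exists a constant C > 0 such that for all ε ∈ (0, 1] and all t ∈ [0, 1/ε]: | 2·e^{−εt/2}·sin((t/2)·√(4−ε²)) / √(4−ε²) − e^{−εt/2}·sin(t) | ≤ C·ε. -/
/-!
Factor out the common damping `e^{-εt/2} ≤ 1`; what remains compares `sin` at the perturbed
frequency `s/2`, `s = √(4 - ε²)`, with `sin` at frequency `1`. The defect `2 - s` is `O(ε²)`,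
so the amplitude error `(2 - s)/s` is `O(ε²)` and the phase error, by the Lipschitz bound on
`sin`, is `t (2 - s)/2 = O(t ε²)`, which is `O(ε)` as long as `t ≤ 1/ε`.
-/

open Real

theorem two_sub_sqrt_four_sub_sq_le (ε : ℝ) : 2 - √(4 - ε ^ 2) ≤ ε ^ 2 / 2 := by
  rcases le_total (2 - ε ^ 2 / 2) 0 with h | h
  · linarith [sqrt_nonneg (4 - ε ^ 2)]
  · have : 2 - ε ^ 2 / 2 ≤ √(4 - ε ^ 2) := le_sqrt_of_sq_le (by nlinarith)
    linarith

theorem abs_two_mul_sin_half_mul_div_sub_sin_le {s : ℝ} (hs : 0 < s) (t : ℝ) :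
    |2 * sin (t / 2 * s) / s - sin t| ≤ |2 - s| / s + |t| * |2 - s| / 2 := by
  have hsplit : 2 * sin (t / 2 * s) / s - sin t
      = (2 - s) / s * sin (t / 2 * s) + (sin (t / 2 * s) - sin t) := by
    field_simp
    ring
  have hamplitude : |(2 - s) / s * sin (t / 2 * s)| ≤ |2 - s| / s := by
    rw [abs_mul, abs_div, abs_of_pos hs]
    exact mul_le_of_le_one_right (by positivity) (abs_sin_le_one _)
  have hphase : |sin (t / 2 * s) - sin t| ≤ |t| * |2 - s| / 2 := by
    calc |sin (t / 2 * s) - sin t| ≤ |t / 2 * s - t| := abs_sin_sub_sin_le _ _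
      _ = |t| * |2 - s| / 2 := by
        rw [show t / 2 * s - t = -(t * (2 - s) / 2) by ring, abs_neg, abs_div, abs_mul,
          abs_two]
  rw [hsplit]
  exact (abs_add_le _ _).trans (add_le_add hamplitude hphase)

/-- Example 2, two-timing error estimate: the multiple-scales approximation
`e^{−εt/2} sin t` of the exact solution of `y'' + εy' + y = 0`, `y(0) = 0`, `y'(0) = 1`
is accurate to `O(ε)` uniformly on time scales of order `1/ε`. -/
theorem stmt17 : ∃ C > (0:ℝ), ∀ ε ∈ Set.Ioc (0:ℝ) 1, ∀ t ∈ Set.Icc (0:ℝ) (1 / ε),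
    |2 * Real.exp (-ε * t / 2) * Real.sin (t / 2 * Real.sqrt (4 - ε ^ 2)) /
        Real.sqrt (4 - ε ^ 2) -
      Real.exp (-ε * t / 2) * Real.sin t| ≤ C * ε := by
  refine ⟨1, one_pos, ?_⟩
  rintro ε ⟨hε0, hε1⟩ t ⟨ht0, htε⟩
  set s := √(4 - ε ^ 2)
  have hs1 : 1 ≤ s := le_sqrt_of_sq_le (by nlinarith)
  have hs2 : s ≤ 2 := sqrt_le_iff.mpr ⟨by norm_num, by nlinarith⟩
  have hdefect : 2 - s ≤ ε ^ 2 / 2 := two_sub_sqrt_four_sub_sq_le ε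
  have htε' : t * ε ≤ 1 := (le_div_iff₀ hε0).mp htε
  have hdamping : exp (-ε * t / 2) ≤ 1 := exp_le_one_iff.mpr (by nlinarith)
  have hfreq := abs_two_mul_sin_half_mul_div_sub_sin_le (by linarith : 0 < s) t
  rw [abs_of_nonneg (by linarith : 0 ≤ 2 - s), abs_of_nonneg ht0] at hfreq
  calc _ = |exp (-ε * t / 2) * (2 * sin (t / 2 * s) / s - sin t)| := by ring_nf
    _ = exp (-ε * t / 2) * |2 * sin (t / 2 * s) / s - sin t| := by
        rw [abs_mul, abs_of_pos (exp_pos _)]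
    _ ≤ |2 * sin (t / 2 * s) / s - sin t| := mul_le_of_le_one_left (abs_nonneg _) hdamping
    _ ≤ (2 - s) / s + t * (2 - s) / 2 := hfreq
    _ ≤ (2 - s) + t * (ε ^ 2 / 2) / 2 := by gcongr; exact div_le_self (by linarith) hs1
    _ ≤ 1 * ε := by nlinarith
end

section
/- Let γ ≥ 0 with γ² < 6, U₀ > 0, and c₁, c₂, c₃ ∈ ℝ. Define Δ(t) = √(6−γ²)·√U₀·(24c₁ + t)/(2√2), u₀(t) = c₂ − 2·ln(cosh Δ(t))/(√6·γ − 6), and v₀(t) = c₃ + 2·ln(sinh Δ(t))/(√6·γ + 6). Then for all t with Δ(t) > 0: (i) 12·(√6·γ − 6)·(u₀'(t))² − 24·u₀''(t) + (√6·γ + 6)·U₀ = 0; (ii) −12·(√6·γ + 6)·(v₀'(t))² − 24·v₀''(t) + (6 − √6·γ)·U₀ = 0; (iii) u₀'(t)·v₀'(t) = U₀/12. -/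
/-!
`Δ` is affine, `Δ = k t + m`. With `a = √6γ − 6` and `b = √6γ + 6` one has
`u₀' = -(2k/a) tanh Δ`, `u₀'' = -(2k²/a) sech² Δ`, `v₀' = (2k/b) coth Δ`, `v₀'' = -(2k²/b) csch² Δ`,
so the identities `tanh² + sech² = 1` and `coth² − csch² = 1` reduce each of the three equations
to the single relation `48k² + abU₀ = 0`, i.e. `k² = (6 − γ²)U₀/8`.
-/

open Real

noncomputable def logCoshProfile (c p k m t : ℝ) : ℝ := c + p * log (cosh (k * t + m))

noncomputable def logSinhProfile (c p k m t : ℝ) : ℝ := c + p * log (sinh (k * t + m))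

section Profiles

variable (c p k m : ℝ)

theorem hasDerivAt_affine (t : ℝ) : HasDerivAt (fun t => k * t + m) k t := by
  simpa using ((hasDerivAt_id t).const_mul k).add_const m

theorem deriv_logCoshProfile :
    deriv (logCoshProfile c p k m) = fun t => p * k * (sinh (k * t + m) / cosh (k * t + m)) := by
  funext t
  have h := (((hasDerivAt_affine k m t).cosh).log
    (cosh_pos _).ne').const_mul p |>.const_add c
  exact h.deriv.trans (by ring)

theorem deriv_deriv_logCoshProfile (t : ℝ) :
    deriv (deriv (logCoshProfile c p k m)) t = p * k ^ 2 / cosh (k * t + m) ^ 2 := by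
  have hC := (hasDerivAt_affine k m t).cosh
  have hS := (hasDerivAt_affine k m t).sinh
  rw [deriv_logCoshProfile]
  refine ((hS.div hC (cosh_pos _).ne').const_mul (p * k)).deriv.trans ?_
  field_simp
  linear_combination p * k ^ 2 * cosh_sq_sub_sinh_sq (k * t + m)

variable {k m}

-- `Real.log` is `log |·|`, so the profile is differentiable wherever `sinh (k * t + m) ≠ 0`.
theorem hasDerivAt_logSinhProfile {t : ℝ} (ht : k * t + m ≠ 0) :
    HasDerivAt (logSinhProfile c p k m) (p * k * (cosh (k * t + m) / sinh (k * t + m))) t := by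
  have h := (((hasDerivAt_affine k m t).sinh).log
    (sinh_ne_zero.mpr ht)).const_mul p |>.const_add c
  exact h.congr_deriv (by ring)

theorem deriv_deriv_logSinhProfile {t : ℝ} (ht : k * t + m ≠ 0) :
    deriv (deriv (logSinhProfile c p k m)) t = -(p * k ^ 2 / sinh (k * t + m) ^ 2) := by
  have hC := (hasDerivAt_affine k m t).cosh
  have hS := (hasDerivAt_affine k m t).sinh
  have hnear : ∀ᶠ s in nhds t, k * s + m ≠ 0 :=
    (hasDerivAt_affine k m t).continuousAt.eventually_ne ht
  rw [Filter.EventuallyEq.deriv_eq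
    (hnear.mono fun s hs => (hasDerivAt_logSinhProfile c p hs).deriv)]
  have hS0 := sinh_ne_zero.mpr ht
  refine ((hC.div hS hS0).const_mul (p * k)).deriv.trans ?_
  field_simp
  linear_combination -(p * k ^ 2) * cosh_sq_sub_sinh_sq (k * t + m)

end Profiles

section OrderOneSolution

variable {a b k U₀ : ℝ} (m c₂ c₃ : ℝ)

theorem raychaudhuri_logCoshProfile (ha : a ≠ 0) (hk : 48 * k ^ 2 + a * b * U₀ = 0) (t : ℝ) :
    12 * a * deriv (logCoshProfile c₂ (-2 / a) k m) t ^ 2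
      - 24 * deriv (deriv (logCoshProfile c₂ (-2 / a) k m)) t + b * U₀ = 0 := by
  rw [deriv_deriv_logCoshProfile, deriv_logCoshProfile]
  have hC0 := (cosh_pos (k * t + m)).ne'
  field_simp
  linear_combination cosh (k * t + m) ^ 2 * hk - 48 * k ^ 2 * cosh_sq_sub_sinh_sq (k * t + m)

theorem raychaudhuri_logSinhProfile (hb : b ≠ 0) (hk : 48 * k ^ 2 + a * b * U₀ = 0) {t : ℝ}
    (ht : k * t + m ≠ 0) :
    -12 * b * deriv (logSinhProfile c₃ (2 / b) k m) t ^ 2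
      - 24 * deriv (deriv (logSinhProfile c₃ (2 / b) k m)) t - a * U₀ = 0 := by
  rw [(hasDerivAt_logSinhProfile c₃ _ ht).deriv, deriv_deriv_logSinhProfile c₃ _ ht]
  have hS0 := sinh_ne_zero.mpr ht
  field_simp
  linear_combination -sinh (k * t + m) ^ 2 * hk - 48 * k ^ 2 * cosh_sq_sub_sinh_sq (k * t + m)

theorem friedmann_logCoshProfile_logSinhProfile (ha : a ≠ 0) (hb : b ≠ 0)
    (hk : 48 * k ^ 2 + a * b * U₀ = 0) {t : ℝ} (ht : k * t + m ≠ 0) :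
    deriv (logCoshProfile c₂ (-2 / a) k m) t * deriv (logSinhProfile c₃ (2 / b) k m) t
      = U₀ / 12 := by
  rw [deriv_logCoshProfile, (hasDerivAt_logSinhProfile c₃ _ ht).deriv]
  have hC0 := (cosh_pos (k * t + m)).ne'
  have hS0 := sinh_ne_zero.mpr ht
  field_simp
  linear_combination -hk

end OrderOneSolution

theorem stmt18_general (γ U₀ c₁ c₂ c₃ : ℝ) (hγ6 : γ ^ 2 < 6) (hU : 0 < U₀)
    (Δ u₀ v₀ : ℝ → ℝ)
    (hΔ : ∀ t, Δ t = Real.sqrt (6 - γ ^ 2) * Real.sqrt U₀ * (24 * c₁ + t) / (2 * Real.sqrt 2))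
    (hu : ∀ t, u₀ t = c₂ - 2 * Real.log (Real.cosh (Δ t)) / (Real.sqrt 6 * γ - 6))
    (hv : ∀ t, v₀ t = c₃ + 2 * Real.log (Real.sinh (Δ t)) / (Real.sqrt 6 * γ + 6)) :
    ∀ t, 0 < Δ t →
      12 * (Real.sqrt 6 * γ - 6) * (deriv u₀ t) ^ 2 - 24 * deriv (deriv u₀) t +
        (Real.sqrt 6 * γ + 6) * U₀ = 0 ∧
      -12 * (Real.sqrt 6 * γ + 6) * (deriv v₀ t) ^ 2 - 24 * deriv (deriv v₀) t +
        (6 - Real.sqrt 6 * γ) * U₀ = 0 ∧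
      deriv u₀ t * deriv v₀ t = U₀ / 12 := by
  set k := √(6 - γ ^ 2) * √U₀ / (2 * √2)
  have hs6 : √6 ^ 2 = 6 := sq_sqrt (by norm_num)
  have ha : √6 * γ - 6 ≠ 0 := fun h => by nlinarith [congrArg (· ^ 2) (eq_of_sub_eq_zero h)]
  have hb : √6 * γ + 6 ≠ 0 := fun h => by
    nlinarith [congrArg (· ^ 2) (eq_neg_of_add_eq_zero_left h)]
  have hk : 48 * k ^ 2 + (√6 * γ - 6) * (√6 * γ + 6) * U₀ = 0 := by
    rw [div_pow, mul_pow, mul_pow, sq_sqrt (by linarith), sq_sqrt hU.le, sq_sqrt zero_le_two]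
    linear_combination γ ^ 2 * U₀ * hs6
  have hΔk : ∀ t, Δ t = k * t + 24 * c₁ * k := fun t => by rw [hΔ]; ring
  have hu' : u₀ = logCoshProfile c₂ (-2 / (√6 * γ - 6)) k (24 * c₁ * k) :=
    funext fun t => by rw [hu, hΔk, logCoshProfile]; ring
  have hv' : v₀ = logSinhProfile c₃ (2 / (√6 * γ + 6)) k (24 * c₁ * k) :=
    funext fun t => by rw [hv, hΔk, logSinhProfile]; ring
  intro t ht
  rw [hΔk] at ht
  subst hu' hv'
  exact ⟨raychaudhuri_logCoshProfile _ _ ha hk t,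
    by linear_combination raychaudhuri_logSinhProfile _ _ hb hk ht.ne',
    friedmann_logCoshProfile_logSinhProfile _ _ _ ha hb hk ht.ne'⟩

/-- Example 3 (induced gravity), order-`O(1)` solution for `γ² < 6`: with
`Δ(t) = √(6−γ²)√U₀(24c₁+t)/(2√2)`, the functions
`u₀ = c₂ − 2 ln(cosh Δ)/(√6γ−6)` and `v₀ = c₃ + 2 ln(sinh Δ)/(√6γ+6)` satisfy the two
Raychaudhuri-type equations and the Friedmann constraint `u₀'·v₀' = U₀/12` wherever
`Δ(t) > 0`. -/
theorem stmt18 (γ U₀ c₁ c₂ c₃ : ℝ) (hγ : 0 ≤ γ) (hγ6 : γ ^ 2 < 6) (hU : 0 < U₀)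
    (Δ u₀ v₀ : ℝ → ℝ)
    (hΔ : ∀ t, Δ t = Real.sqrt (6 - γ ^ 2) * Real.sqrt U₀ * (24 * c₁ + t) / (2 * Real.sqrt 2))
    (hu : ∀ t, u₀ t = c₂ - 2 * Real.log (Real.cosh (Δ t)) / (Real.sqrt 6 * γ - 6))
    (hv : ∀ t, v₀ t = c₃ + 2 * Real.log (Real.sinh (Δ t)) / (Real.sqrt 6 * γ + 6)) :
    ∀ t, 0 < Δ t →
      12 * (Real.sqrt 6 * γ - 6) * (deriv u₀ t) ^ 2 - 24 * deriv (deriv u₀) t +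
        (Real.sqrt 6 * γ + 6) * U₀ = 0 ∧
      -12 * (Real.sqrt 6 * γ + 6) * (deriv v₀ t) ^ 2 - 24 * deriv (deriv v₀) t +
        (6 - Real.sqrt 6 * γ) * U₀ = 0 ∧
      deriv u₀ t * deriv v₀ t = U₀ / 12 :=
  stmt18_general γ U₀ c₁ c₂ c₃ hγ6 hU Δ u₀ v₀ hΔ hu hv
end
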